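/- Explicit optimal allocation of a selling position under exponential utility: for x ∈ ℝ and Z ∈ L^∞, the optimal intertemporal allocation (X_t)_{t∈𝕋} ∈ A(x − Z) of x − Z (the element of A(x − Z) with ∑_{t∈𝕋} E[u_t(X̃_t)] = U(x − Z)) is given by X_1 = (B_1/α_1)[β_1 x − log L_1(α, −Z)] and, for t = 2,...,T, X_t = (B_t/α_t)[β_1 x − log L_t(α, −Z) + ∑_{k=1}^{t−1} (β_{k+1}/α_k)·log L_k(α, −Z)]. -/

import Mathlib

/-!
Write `ℓ_t = log L_t(α, -Z)` and let `x̃_t` be the claimed discounted allocation. Then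
`Σ_t x̃_t = x - Z` by telescoping, and the marginal utilities `M_t = exp (-α_t x̃_t)` form a
martingale: `M_{t+1}` is `L_{t+1}` times an `F_t`-measurable factor, and
`E[L_{t+1} | F_t] = L_t ^ (β_{t+1}/β_t)` gives back `M_t` because
`β_{t+1}/β_t = 1 + β_{t+1}/α_t`. For any other allocation `Y`, concavity gives
`u_t(Ỹ_t) ≤ u_t(x̃_t) + M_t (Ỹ_t - x̃_t)`, and by the martingale property the correction terms
sum to `E[M_T Σ_t (Ỹ_t - x̃_t)] = 0`. So an allocation at least as good as `B x̃` has vanishing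
tangent gaps, hence equals `B x̃` almost surely.
-/

open MeasureTheory Finset Real

noncomputable section

/-- `A(W)`: the set of admissible intertemporal allocations of the risk `W`:
adapted processes `(Y_t)_{t∈𝕋}` with each `Y_t` essentially bounded and
`∑_{t∈𝕋} Y_t/B_t = W` a.s. -/
def IsAlloc {Ω : Type*} [mΩ : MeasurableSpace Ω] (μ : Measure Ω) (T : ℕ)
    (ℱ : ℕ → MeasurableSpace Ω) (B : ℕ → Ω → ℝ) (W : Ω → ℝ) (Y : ℕ → Ω → ℝ) : Prop :=
  (∀ t ∈ Finset.Icc 1 T, Measurable[ℱ t] (Y t) ∧ ∃ C : ℝ, ∀ᵐ ω ∂μ, |Y t ω| ≤ C) ∧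
  ∀ᵐ ω ∂μ, ∑ t ∈ Finset.Icc 1 T, Y t ω / B t ω = W ω

/-- The integrated expected utility `∑_{t∈𝕋} E[u_t(Ỹ_t)]` of an allocation. -/
def allocVal {Ω : Type*} [mΩ : MeasurableSpace Ω] (μ : Measure Ω) (T : ℕ)
    (u : ℕ → ℝ → ℝ) (B : ℕ → Ω → ℝ) (Y : ℕ → Ω → ℝ) : ℝ :=
  ∑ t ∈ Finset.Icc 1 T, ∫ ω, u t (Y t ω / B t ω) ∂μ

/-- The utility functional `U(W) = sup { ∑_t E[u_t(Ỹ_t)] : Y ∈ A(W) }`. -/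
def Util {Ω : Type*} [mΩ : MeasurableSpace Ω] (μ : Measure Ω) (T : ℕ)
    (ℱ : ℕ → MeasurableSpace Ω) (u : ℕ → ℝ → ℝ) (B : ℕ → Ω → ℝ) (W : Ω → ℝ) : ℝ :=
  sSup {s : ℝ | ∃ Y, IsAlloc μ T ℱ B W Y ∧ s = allocVal μ T u B Y}

theorem expUtility_tangent_sub_eq (a y z : ℝ) (ha : a ≠ 0) :
    1 / a * (1 - exp (-a * z)) + exp (-a * z) * (y - z) - 1 / a * (1 - exp (-a * y))
      = exp (-a * z) / a * (exp (-a * (y - z)) - (-a * (y - z) + 1)) := by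
  have hexp : exp (-a * y) = exp (-a * z) * exp (-a * (y - z)) := by
    rw [← exp_add]; ring_nf
  rw [hexp]
  field_simp
  ring

theorem expUtility_le_tangent {a : ℝ} (ha : 0 < a) (y z : ℝ) :
    1 / a * (1 - exp (-a * y)) ≤ 1 / a * (1 - exp (-a * z)) + exp (-a * z) * (y - z) := by
  rw [← sub_nonneg, expUtility_tangent_sub_eq a y z ha.ne']
  exact mul_nonneg (div_pos (exp_pos _) ha).le (sub_nonneg.2 (add_one_le_exp _))

theorem eq_of_expUtility_eq_tangent {a y z : ℝ} (ha : 0 < a)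
    (h : 1 / a * (1 - exp (-a * y)) = 1 / a * (1 - exp (-a * z)) + exp (-a * z) * (y - z)) :
    y = z := by
  have h0 := expUtility_tangent_sub_eq a y z ha.ne'
  rw [← h, sub_self, eq_comm, mul_eq_zero, sub_eq_zero] at h0
  obtain h0 | h0 := h0
  · exact absurd h0 (div_pos (exp_pos _) ha).ne'
  · by_contra hyz
    have := add_one_lt_exp (mul_ne_zero (neg_ne_zero.2 ha.ne') (sub_ne_zero.2 hyz))
    exact this.ne h0.symm

theorem mem_Icc_exp_iff {v K : ℝ} : v ∈ Set.Icc (exp (-K)) (exp K) ↔ 0 < v ∧ |log v| ≤ K := by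
  refine ⟨fun ⟨hlo, hhi⟩ => ?_, fun ⟨hv, hK⟩ => ?_⟩
  · have hv := (exp_pos _).trans_le hlo
    exact ⟨hv, abs_le.2 ⟨(le_log_iff_exp_le hv).2 hlo, (log_le_iff_le_exp hv).2 hhi⟩⟩
  · obtain ⟨hlo, hhi⟩ := abs_le.1 hK
    exact ⟨(le_log_iff_exp_le hv).1 hlo, (log_le_iff_le_exp hv).1 hhi⟩

theorem rpow_mem_Icc_exp {v p K : ℝ} (hv : v ∈ Set.Icc (exp (-K)) (exp K)) (hp : |p| ≤ 1) :
    v ^ p ∈ Set.Icc (exp (-K)) (exp K) := by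
  obtain ⟨hv, hK⟩ := mem_Icc_exp_iff.1 hv
  refine mem_Icc_exp_iff.2 ⟨rpow_pos_of_pos hv p, ?_⟩
  rw [log_rpow hv, abs_mul]
  exact (mul_le_of_le_one_left (abs_nonneg _) hp).trans hK

theorem one_le_discount {Ω : Type*} {T : ℕ} {r : ℕ → Ω → ℝ}
    (hr : ∀ t ∈ Icc 1 T, ∀ ω, 0 ≤ r t ω) : ∀ t ∈ Icc 1 T, ∀ ω, 1 ≤ ∏ k ∈ Icc 1 t, (1 + r k ω) :=
  fun _ ht ω => one_le_prod fun k hk =>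
    le_add_of_nonneg_right (hr k (Icc_subset_Icc_right (mem_Icc.1 ht).2 hk) ω)

section Measure

variable {Ω : Type*} [mΩ : MeasurableSpace Ω] {μ : Measure Ω}

theorem ae_mem_Icc_condExp [IsFiniteMeasure μ] {m : MeasurableSpace Ω} (hm : m ≤ mΩ)
    {f : Ω → ℝ} (hf : Integrable f μ) {a b : ℝ} (hab : ∀ᵐ ω ∂μ, f ω ∈ Set.Icc a b) :
    ∀ᵐ ω ∂μ, μ[f | m] ω ∈ Set.Icc a b := by
  have hlo := condExp_mono (m := m) (integrable_const a) hf (hab.mono fun _ h => h.1)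
  have hhi := condExp_mono (m := m) hf (integrable_const b) (hab.mono fun _ h => h.2)
  rw [condExp_const hm] at hlo hhi
  filter_upwards [hlo, hhi] with ω h1 h2 using ⟨h1, h2⟩

theorem integral_condExp_mul [IsFiniteMeasure μ] {m : MeasurableSpace Ω} (hm : m ≤ mΩ)
    {f g : Ω → ℝ} (hg : Integrable g μ) (hf : StronglyMeasurable[m] f) {C : ℝ}
    (hC : ∀ᵐ ω ∂μ, |f ω| ≤ C) :
    ∫ ω, μ[g | m] ω * f ω ∂μ = ∫ ω, g ω * f ω ∂μ := by
  calc ∫ ω, μ[g | m] ω * f ω ∂μ = ∫ ω, (f * μ[g | m]) ω ∂μ := by simp only [Pi.mul_apply, mul_comm]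
    _ = ∫ ω, μ[f * g | m] ω ∂μ :=
      integral_congr_ae (condExp_stronglyMeasurable_mul_of_bound hm hf hg C hC).symm
    _ = ∫ ω, g ω * f ω ∂μ := by rw [integral_condExp hm]; simp only [Pi.mul_apply, mul_comm]

theorem integrable_exp_mul_of_ae_abs_le [IsFiniteMeasure μ] {f : Ω → ℝ}
    (hf : AEStronglyMeasurable f μ) {C : ℝ} (hC : ∀ᵐ ω ∂μ, |f ω| ≤ C) (a : ℝ) :
    Integrable (fun ω => exp (a * f ω)) μ := by
  refine .of_bound (hf.aemeasurable.const_mul a).exp.aestronglyMeasurable (exp (|a| * C)) ?_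
  filter_upwards [hC] with ω h
  rw [norm_eq_abs, abs_exp, exp_le_exp]
  calc a * f ω ≤ |a| * |f ω| := abs_mul a (f ω) ▸ le_abs_self _
    _ ≤ |a| * C := mul_le_mul_of_nonneg_left h (abs_nonneg a)

theorem ae_eq_zero_of_sum_integral_nonpos {ι : Type*} {s : Finset ι} {g : ι → Ω → ℝ}
    (hg : ∀ i ∈ s, 0 ≤ᵐ[μ] g i) (hint : ∀ i ∈ s, Integrable (g i) μ)
    (hsum : ∑ i ∈ s, ∫ ω, g i ω ∂μ ≤ 0) : ∀ i ∈ s, g i =ᵐ[μ] 0 := by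
  have hnonneg : ∀ i ∈ s, 0 ≤ ∫ ω, g i ω ∂μ := fun i hi => integral_nonneg_of_ae (hg i hi)
  have hzero := (sum_eq_zero_iff_of_nonneg hnonneg).1 (hsum.antisymm (sum_nonneg hnonneg))
  exact fun i hi => (integral_eq_zero_iff_of_nonneg_ae (hg i hi) (hint i hi)).1 (hzero i hi)

theorem sum_integral_mul_eq_zero_of_condExp [IsFiniteMeasure μ] {ℱ : ℕ → MeasurableSpace Ω}
    (hℱ : ∀ t, ℱ t ≤ mΩ) {s : Finset ℕ} {T : ℕ} {M d : ℕ → Ω → ℝ}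
    (hMT : Integrable (M T) μ) (hM : ∀ t ∈ s, M t =ᵐ[μ] μ[M T | ℱ t])
    (hd : ∀ t ∈ s, StronglyMeasurable[ℱ t] (d t)) (hdC : ∀ t ∈ s, ∃ C, ∀ᵐ ω ∂μ, |d t ω| ≤ C)
    (hsum : ∀ᵐ ω ∂μ, ∑ t ∈ s, d t ω = 0) :
    ∑ t ∈ s, ∫ ω, M t ω * d t ω ∂μ = 0 := by
  have hproj : ∀ t ∈ s, ∫ ω, M t ω * d t ω ∂μ = ∫ ω, M T ω * d t ω ∂μ := by
    intro t ht
    obtain ⟨C, hC⟩ := hdC t ht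
    rw [← integral_condExp_mul (hℱ t) hMT (hd t ht) hC]
    exact integral_congr_ae (by filter_upwards [hM t ht] with ω h; rw [h])
  have hint : ∀ t ∈ s, Integrable (fun ω => M T ω * d t ω) μ := fun t ht =>
    have ⟨C, hC⟩ := hdC t ht
    hMT.mul_bdd ((hd t ht).mono (hℱ t)).aestronglyMeasurable (c := C) hC
  rw [sum_congr rfl hproj, ← integral_finsetSum s hint]
  refine integral_eq_zero_of_ae ?_
  filter_upwards [hsum] with ω h
  rw [Pi.zero_apply, ← mul_sum, h, mul_zero]

theorem ae_eq_condExp_of_condExp_succ [IsFiniteMeasure μ] {ℱ : ℕ → MeasurableSpace Ω}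
    (hℱmono : Monotone ℱ) (hℱ : ∀ t, ℱ t ≤ mΩ) {M : ℕ → Ω → ℝ} {a T : ℕ}
    (hMT : StronglyMeasurable[ℱ T] (M T)) (hint : Integrable (M T) μ)
    (hstep : ∀ t ∈ Ico a T, μ[M (t + 1) | ℱ t] =ᵐ[μ] M t) :
    ∀ t ∈ Icc a T, M t =ᵐ[μ] μ[M T | ℱ t] := by
  intro t ht
  rw [mem_Icc] at ht
  induction ht.2 using Nat.decreasingInduction with
  | self => rw [condExp_of_stronglyMeasurable (hℱ T) hMT hint]
  | of_succ k hk ih =>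
    calc M k =ᵐ[μ] μ[M (k + 1) | ℱ k] := (hstep k (mem_Ico.2 ⟨ht.1, hk⟩)).symm
      _ =ᵐ[μ] μ[μ[M T | ℱ (k + 1)] | ℱ k] := condExp_congr_ae (ih ⟨by omega, hk⟩)
      _ =ᵐ[μ] μ[M T | ℱ k] := condExp_condExp_of_le (hℱmono k.le_succ) (hℱ _)

end Measure

section Allocation

variable {Ω : Type*} [mΩ : MeasurableSpace Ω] {μ : Measure Ω} {ℱ : ℕ → MeasurableSpace Ω}
  {T : ℕ}

def IsBoundedAdapted (μ : Measure Ω) (ℱ : ℕ → MeasurableSpace Ω) (T : ℕ)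
    (f : ℕ → Ω → ℝ) : Prop :=
  ∀ t ∈ Icc 1 T, Measurable[ℱ t] (f t) ∧ ∃ C : ℝ, ∀ᵐ ω ∂μ, |f t ω| ≤ C

namespace IsBoundedAdapted

variable {f g : ℕ → Ω → ℝ}

theorem sub (hf : IsBoundedAdapted μ ℱ T f) (hg : IsBoundedAdapted μ ℱ T g) :
    IsBoundedAdapted μ ℱ T fun t ω => f t ω - g t ω := by
  intro t ht
  obtain ⟨hfm, Cf, hCf⟩ := hf t ht
  obtain ⟨hgm, Cg, hCg⟩ := hg t ht
  refine ⟨hfm.sub hgm, Cf + Cg, ?_⟩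
  filter_upwards [hCf, hCg] with ω h1 h2
  exact (abs_sub _ _).trans (add_le_add h1 h2)

theorem mul (hf : IsBoundedAdapted μ ℱ T f) (hg : IsBoundedAdapted μ ℱ T g) :
    IsBoundedAdapted μ ℱ T fun t ω => f t ω * g t ω := by
  intro t ht
  obtain ⟨hfm, Cf, hCf⟩ := hf t ht
  obtain ⟨hgm, Cg, hCg⟩ := hg t ht
  refine ⟨hfm.mul hgm, Cf * Cg, ?_⟩
  filter_upwards [hCf, hCg] with ω h1 h2
  rw [abs_mul]
  exact mul_le_mul h1 h2 (abs_nonneg _) ((abs_nonneg _).trans h1)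

theorem div_of_one_le {B : ℕ → Ω → ℝ} (hf : IsBoundedAdapted μ ℱ T f)
    (hB : ∀ t ∈ Icc 1 T, Measurable[ℱ t] (B t)) (hB1 : ∀ t ∈ Icc 1 T, ∀ ω, 1 ≤ B t ω) :
    IsBoundedAdapted μ ℱ T fun t ω => f t ω / B t ω := by
  intro t ht
  obtain ⟨hfm, C, hC⟩ := hf t ht
  refine ⟨hfm.div (hB t ht), C, ?_⟩
  filter_upwards [hC] with ω h
  rw [abs_div, abs_of_pos (one_pos.trans_le (hB1 t ht ω))]
  exact (div_le_self (abs_nonneg _) (hB1 t ht ω)).trans h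

theorem integrable_exp_mul [IsFiniteMeasure μ] (hℱ : ∀ t, ℱ t ≤ mΩ)
    (hf : IsBoundedAdapted μ ℱ T f) {t : ℕ} (ht : t ∈ Icc 1 T) (a : ℝ) :
    Integrable (fun ω => exp (a * f t ω)) μ :=
  have ⟨hfm, _, hC⟩ := hf t ht
  integrable_exp_mul_of_ae_abs_le (hfm.mono (hℱ t) le_rfl).aestronglyMeasurable hC a

theorem integrable_expUtility [IsFiniteMeasure μ] (hℱ : ∀ t, ℱ t ≤ mΩ)
    (hf : IsBoundedAdapted μ ℱ T f) {t : ℕ} (ht : t ∈ Icc 1 T) (a : ℝ) :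
    Integrable (fun ω => 1 / a * (1 - exp (-a * f t ω))) μ :=
  ((integrable_const 1).sub (hf.integrable_exp_mul hℱ ht _)).const_mul _

end IsBoundedAdapted

theorem ae_eq_of_sum_integral_expUtility_le [IsFiniteMeasure μ] (hℱ : ∀ t, ℱ t ≤ mΩ)
    {α : ℕ → ℝ} (hα : ∀ t ∈ Icc 1 T, 0 < α t) {y z : ℕ → Ω → ℝ}
    (hy : IsBoundedAdapted μ ℱ T y) (hz : IsBoundedAdapted μ ℱ T z)
    (hsum : ∀ᵐ ω ∂μ, ∑ t ∈ Icc 1 T, y t ω = ∑ t ∈ Icc 1 T, z t ω)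
    (hmart : ∀ t ∈ Icc 1 T,
      (fun ω => exp (-α t * z t ω)) =ᵐ[μ] μ[fun ω => exp (-α T * z T ω) | ℱ t])
    (hle : ∑ t ∈ Icc 1 T, ∫ ω, 1 / α t * (1 - exp (-α t * z t ω)) ∂μ
      ≤ ∑ t ∈ Icc 1 T, ∫ ω, 1 / α t * (1 - exp (-α t * y t ω)) ∂μ) :
    ∀ t ∈ Icc 1 T, y t =ᵐ[μ] z t := by
  intro t₀ ht₀
  have hT : T ∈ Icc 1 T := by simp only [mem_Icc] at ht₀ ⊢; omega
  have hd := hy.sub hz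
  have hMd_int : ∀ t ∈ Icc 1 T,
      Integrable (fun ω => exp (-α t * z t ω) * (y t ω - z t ω)) μ := fun t ht =>
    have ⟨hdm, C, hC⟩ := hd t ht
    (hz.integrable_exp_mul hℱ ht _).mul_bdd (hdm.mono (hℱ t) le_rfl).aestronglyMeasurable
      (c := C) hC
  set g : ℕ → Ω → ℝ := fun t ω => 1 / α t * (1 - exp (-α t * z t ω))
    + exp (-α t * z t ω) * (y t ω - z t ω) - 1 / α t * (1 - exp (-α t * y t ω))
  have hg_nonneg : ∀ t ∈ Icc 1 T, 0 ≤ᵐ[μ] g t := fun t ht =>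
    ae_of_all _ fun ω => sub_nonneg.2 (expUtility_le_tangent (hα t ht) _ _)
  have hg_int : ∀ t ∈ Icc 1 T, Integrable (g t) μ := fun t ht =>
    ((hz.integrable_expUtility hℱ ht _).add (hMd_int t ht)).sub (hy.integrable_expUtility hℱ ht _)
  have horth : ∑ t ∈ Icc 1 T, ∫ ω, exp (-α t * z t ω) * (y t ω - z t ω) ∂μ = 0 :=
    sum_integral_mul_eq_zero_of_condExp hℱ (hz.integrable_exp_mul hℱ hT _) hmart
      (fun t ht => (hd t ht).1.stronglyMeasurable) (fun t ht => (hd t ht).2)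
      (by filter_upwards [hsum] with ω h; rw [sum_sub_distrib, h, sub_self])
  have hg_split : ∀ t ∈ Icc 1 T, ∫ ω, g t ω ∂μ = ∫ ω, 1 / α t * (1 - exp (-α t * z t ω)) ∂μ
      + ∫ ω, exp (-α t * z t ω) * (y t ω - z t ω) ∂μ
      - ∫ ω, 1 / α t * (1 - exp (-α t * y t ω)) ∂μ := fun t ht => by
    rw [← integral_add (hz.integrable_expUtility hℱ ht _) (hMd_int t ht),
      ← integral_sub (f := fun ω => _ + _) ((hz.integrable_expUtility hℱ ht _).add (hMd_int t ht))
        (hy.integrable_expUtility hℱ ht _)]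
  have hg_sum : ∑ t ∈ Icc 1 T, ∫ ω, g t ω ∂μ ≤ 0 := by
    rw [sum_congr rfl hg_split, sum_sub_distrib, sum_add_distrib, horth]
    linarith
  filter_upwards [ae_eq_zero_of_sum_integral_nonpos hg_nonneg hg_int hg_sum t₀ ht₀] with ω h
  exact eq_of_expUtility_eq_tangent (hα t₀ ht₀) (sub_eq_zero.1 h).symm

theorem isAlloc_mul {B z : ℕ → Ω → ℝ} {W : Ω → ℝ} (hB : IsBoundedAdapted μ ℱ T B)
    (hB0 : ∀ t ∈ Icc 1 T, ∀ ω, B t ω ≠ 0) (hz : IsBoundedAdapted μ ℱ T z)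
    (hsum : ∀ᵐ ω ∂μ, ∑ t ∈ Icc 1 T, z t ω = W ω) :
    IsAlloc μ T ℱ B W fun t ω => B t ω * z t ω := by
  refine ⟨hB.mul hz, ?_⟩
  filter_upwards [hsum] with ω h
  rw [← h]
  exact sum_congr rfl fun t ht => mul_div_cancel_left₀ _ (hB0 t ht ω)

theorem ae_eq_mul_of_isOptimal [IsFiniteMeasure μ] (hℱ : ∀ t, ℱ t ≤ mΩ) {α : ℕ → ℝ}
    (hα : ∀ t ∈ Icc 1 T, 0 < α t) {u : ℕ → ℝ → ℝ}
    (hu : ∀ t x, u t x = 1 / α t * (1 - exp (-α t * x))) {B z Y : ℕ → Ω → ℝ} {W : Ω → ℝ}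
    (hB : IsBoundedAdapted μ ℱ T B) (hB1 : ∀ t ∈ Icc 1 T, ∀ ω, 1 ≤ B t ω)
    (hz : IsBoundedAdapted μ ℱ T z) (hzsum : ∀ᵐ ω ∂μ, ∑ t ∈ Icc 1 T, z t ω = W ω)
    (hmart : ∀ t ∈ Icc 1 T,
      (fun ω => exp (-α t * z t ω)) =ᵐ[μ] μ[fun ω => exp (-α T * z T ω) | ℱ t])
    (hY : IsAlloc μ T ℱ B W Y)
    (hYopt : ∀ Y', IsAlloc μ T ℱ B W Y' → allocVal μ T u B Y' ≤ allocVal μ T u B Y) :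
    ∀ t ∈ Icc 1 T, Y t =ᵐ[μ] fun ω => B t ω * z t ω := by
  have hB0 : ∀ t ∈ Icc 1 T, ∀ ω, B t ω ≠ 0 := fun t ht ω =>
    (one_pos.trans_le (hB1 t ht ω)).ne'
  have hle := hYopt _ (isAlloc_mul hB hB0 hz hzsum)
  have hval : allocVal μ T u B (fun t ω => B t ω * z t ω)
      = ∑ t ∈ Icc 1 T, ∫ ω, 1 / α t * (1 - exp (-α t * z t ω)) ∂μ :=
    sum_congr rfl fun t ht => integral_congr_ae <| ae_of_all _ fun ω => by
      dsimp only
      rw [hu, mul_div_cancel_left₀ _ (hB0 t ht ω)]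
  have hdisc := ae_eq_of_sum_integral_expUtility_le hℱ hα
    (IsBoundedAdapted.div_of_one_le hY.1 (fun t ht => (hB t ht).1) hB1) hz
    (by filter_upwards [hY.2, hzsum] with ω h1 h2; rw [h1, h2]) hmart
    (by simpa only [← hval, allocVal, hu] using hle)
  intro t ht
  filter_upwards [hdisc t ht] with ω h
  rw [← h, mul_div_cancel₀ _ (hB0 t ht ω)]

theorem isBoundedAdapted_discount (hℱmono : Monotone ℱ) {r : ℕ → Ω → ℝ}
    (hr_meas : ∀ t ∈ Icc 1 T, Measurable[ℱ (t - 1)] (r t))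
    (hr_nonneg : ∀ t ∈ Icc 1 T, ∀ ω, 0 ≤ r t ω) (hr_bdd : ∀ t ∈ Icc 1 T, ∃ C : ℝ, ∀ ω, r t ω ≤ C) :
    IsBoundedAdapted μ ℱ T fun t ω => ∏ k ∈ Icc 1 t, (1 + r k ω) := by
  intro t ht
  have hsub : Icc 1 t ⊆ Icc 1 T := Icc_subset_Icc_right (mem_Icc.1 ht).2
  choose C hC using fun k (hk : k ∈ Icc 1 t) => hr_bdd k (hsub hk)
  refine ⟨Finset.measurable_prod _ fun k hk => measurable_const.add
      ((hr_meas k (hsub hk)).mono (hℱmono (by rw [mem_Icc] at hk; omega)) le_rfl),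
    ∏ k ∈ (Icc 1 t).attach, (1 + C k.1 k.2), ae_of_all _ fun ω => ?_⟩
  rw [abs_of_nonneg (zero_le_one.trans (one_le_discount hr_nonneg t ht ω)), ← prod_attach]
  exact prod_le_prod (fun k _ => by linarith [hr_nonneg k.1 (hsub k.2) ω])
    fun k _ => by linarith [hC k.1 k.2 ω]

end Allocation

section Coefficients

variable {T : ℕ} {α β : ℕ → ℝ}

theorem sum_Icc_one_eq_add {f : ℕ → ℝ} {t : ℕ} (ht : 1 ≤ t) :
    ∑ k ∈ Icc 1 t, f k = ∑ k ∈ Icc 1 (t - 1), f k + f t := by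
  obtain ⟨n, rfl⟩ := Nat.exists_eq_add_of_le' ht
  rw [sum_Icc_succ_top (by omega), Nat.add_sub_cancel]

theorem beta_pos (hα : ∀ t ∈ Icc 1 T, 0 < α t)
    (hβ : ∀ t ∈ Icc 1 T, 1 / β t = ∑ k ∈ Icc t T, 1 / α k) {t : ℕ} (ht : t ∈ Icc 1 T) :
    0 < β t := by
  rw [mem_Icc] at ht
  refine one_div_pos.1 (hβ t (mem_Icc.2 ht) ▸ sum_pos (fun k hk => ?_) ⟨t, by simp [ht.2]⟩)
  exact one_div_pos.2 (hα k (by rw [mem_Icc] at hk ⊢; omega))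

theorem one_div_beta_eq_add (hβ : ∀ t ∈ Icc 1 T, 1 / β t = ∑ k ∈ Icc t T, 1 / α k) {t : ℕ}
    (ht : t ∈ Ico 1 T) : 1 / β t = 1 / α t + 1 / β (t + 1) := by
  rw [mem_Ico] at ht
  have hIcc : Icc t T = insert t (Icc (t + 1) T) := by ext; simp only [mem_Icc, mem_insert]; omega
  rw [hβ t (mem_Icc.2 ⟨ht.1, ht.2.le⟩), hβ (t + 1) (mem_Icc.2 ⟨by omega, ht.2⟩), hIcc,
    sum_insert (by simp)]

theorem beta_self (hβ : ∀ t ∈ Icc 1 T, 1 / β t = ∑ k ∈ Icc t T, 1 / α k) (hT : 1 ≤ T) :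
    β T = α T := by
  simpa using hβ T (mem_Icc.2 ⟨hT, le_rfl⟩)

theorem abs_beta_div_beta_succ_le_one (hα : ∀ t ∈ Icc 1 T, 0 < α t)
    (hβ : ∀ t ∈ Icc 1 T, 1 / β t = ∑ k ∈ Icc t T, 1 / α k) {t : ℕ} (ht : t ∈ Ico 1 T) :
    |β t / β (t + 1)| ≤ 1 := by
  have hrec := one_div_beta_eq_add hβ ht
  rw [mem_Ico] at ht
  have hβt := beta_pos hα hβ (mem_Icc.2 ⟨ht.1, ht.2.le⟩)
  have hβt' := beta_pos hα hβ (mem_Icc.2 ⟨by omega, ht.2⟩ : t + 1 ∈ Icc 1 T)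
  have hαt := hα t (mem_Icc.2 ⟨ht.1, ht.2.le⟩)
  rw [abs_of_pos (div_pos hβt hβt'), div_le_one hβt', ← one_div_le_one_div hβt' hβt, hrec]
  linarith [one_div_pos.2 hαt]

theorem beta_succ_div_beta_eq (hα : ∀ t ∈ Icc 1 T, 0 < α t)
    (hβ : ∀ t ∈ Icc 1 T, 1 / β t = ∑ k ∈ Icc t T, 1 / α k) {t : ℕ} (ht : t ∈ Ico 1 T) :
    β (t + 1) / β t = β (t + 1) / α t + 1 := by
  have hrec := one_div_beta_eq_add hβ ht
  rw [mem_Ico] at ht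
  have hβt := (beta_pos hα hβ (mem_Icc.2 ⟨ht.1, ht.2.le⟩)).ne'
  have hβt' := (beta_pos hα hβ (mem_Icc.2 ⟨by omega, ht.2⟩ : t + 1 ∈ Icc 1 T)).ne'
  have hαt := (hα t (mem_Icc.2 ⟨ht.1, ht.2.le⟩)).ne'
  rw [div_eq_mul_one_div, hrec]
  field_simp

/-- The discounted optimal allocation `X̃_t`, in terms of `ℓ_k = log L_k(α, -Z)`. -/
def optimalDiscounted (α β : ℕ → ℝ) (x : ℝ) (ℓ : ℕ → ℝ) (t : ℕ) : ℝ :=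
  (β 1 * x - ℓ t + ∑ k ∈ Icc 1 (t - 1), β (k + 1) / α k * ℓ k) / α t

theorem optimalDiscounted_congr {x : ℝ} {ℓ ℓ' : ℕ → ℝ} {t : ℕ} (ht : 1 ≤ t)
    (h : ∀ k ∈ Icc 1 t, ℓ k = ℓ' k) :
    optimalDiscounted α β x ℓ t = optimalDiscounted α β x ℓ' t := by
  rw [optimalDiscounted, optimalDiscounted, h t (mem_Icc.2 ⟨ht, le_rfl⟩),
    sum_congr rfl fun k hk => by rw [h k (Icc_subset_Icc_right (Nat.sub_le t 1) hk)]]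

theorem neg_mul_optimalDiscounted {x : ℝ} {ℓ : ℕ → ℝ} {t : ℕ} (hα : α t ≠ 0) :
    -α t * optimalDiscounted α β x ℓ t
      = ℓ t - (β 1 * x + ∑ k ∈ Icc 1 (t - 1), β (k + 1) / α k * ℓ k) := by
  rw [optimalDiscounted]
  field_simp
  ring

theorem exp_neg_mul_optimalDiscounted (hα : ∀ t ∈ Icc 1 T, 0 < α t)
    (hβ : ∀ t ∈ Icc 1 T, 1 / β t = ∑ k ∈ Icc t T, 1 / α k) {x : ℝ} {ℓ : ℕ → ℝ} {s : ℕ}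
    (hs : s ∈ Ico 1 T) :
    exp (-α s * optimalDiscounted α β x ℓ s)
      = exp (-(β 1 * x + ∑ k ∈ Icc 1 s, β (k + 1) / α k * ℓ k)) * exp (β (s + 1) / β s * ℓ s) := by
  rw [neg_mul_optimalDiscounted (hα s (Ico_subset_Icc_self hs)).ne',
    beta_succ_div_beta_eq hα hβ hs, sum_Icc_one_eq_add (mem_Ico.1 hs).1, ← exp_add]
  ring_nf

theorem abs_optimalDiscounted_le {x K : ℝ} {ℓ : ℕ → ℝ} {t : ℕ} (ht : 1 ≤ t)
    (hℓ : ∀ k ∈ Icc 1 t, |ℓ k| ≤ K) :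
    |optimalDiscounted α β x ℓ t|
      ≤ (|β 1 * x| + K + ∑ k ∈ Icc 1 (t - 1), |β (k + 1) / α k| * K) / |α t| := by
  rw [optimalDiscounted, abs_div]
  refine div_le_div_of_nonneg_right ?_ (abs_nonneg _)
  have hsum : |∑ k ∈ Icc 1 (t - 1), β (k + 1) / α k * ℓ k|
      ≤ ∑ k ∈ Icc 1 (t - 1), |β (k + 1) / α k| * K := by
    refine (abs_sum_le_sum_abs _ _).trans (sum_le_sum fun k hk => ?_)
    rw [abs_mul]
    exact mul_le_mul_of_nonneg_left (hℓ k (by rw [mem_Icc] at hk ⊢; omega)) (abs_nonneg _)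
  have hℓt := hℓ t (mem_Icc.2 ⟨ht, le_rfl⟩)
  calc _ ≤ |β 1 * x - ℓ t| + |∑ k ∈ Icc 1 (t - 1), β (k + 1) / α k * ℓ k| := abs_add_le _ _
    _ ≤ |β 1 * x| + |ℓ t| + |∑ k ∈ Icc 1 (t - 1), β (k + 1) / α k * ℓ k| := by
      gcongr; exact abs_sub _ _
    _ ≤ _ := by linarith

theorem sum_optimalDiscounted (hT : 1 ≤ T) (hα : ∀ t ∈ Icc 1 T, 0 < α t)
    (hβ : ∀ t ∈ Icc 1 T, 1 / β t = ∑ k ∈ Icc t T, 1 / α k) (x : ℝ) (ℓ : ℕ → ℝ) :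
    ∑ t ∈ Icc 1 T, optimalDiscounted α β x ℓ t = x - ℓ T / α T := by
  -- telescoping: the `t`-th term is `P t / β t - P (t + 1) / β (t + 1)` for `t < T`
  set P : ℕ → ℝ := fun t => β 1 * x + ∑ k ∈ Icc 1 (t - 1), β (k + 1) / α k * ℓ k
  have htail : ∀ t ∈ Icc 1 T,
      ∑ s ∈ Icc t T, optimalDiscounted α β x ℓ s = P t / β t - ℓ T / α T := by
    intro t ht
    rw [mem_Icc] at ht
    induction ht.2 using Nat.decreasingInduction with
    | self =>
      rw [Icc_self, sum_singleton, beta_self hβ hT, optimalDiscounted]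
      ring
    | of_succ k hk ih =>
      have hkT : k ∈ Ico 1 T := mem_Ico.2 ⟨ht.1, hk⟩
      have hIcc : Icc k T = insert k (Icc (k + 1) T) := by
        ext; simp only [mem_Icc, mem_insert]; omega
      have hP : P (k + 1) = P k + β (k + 1) / α k * ℓ k := by
        simp only [P, Nat.add_sub_cancel, sum_Icc_one_eq_add ht.1, add_assoc]
      have hβk' := (beta_pos hα hβ (mem_Icc.2 ⟨by omega, hk⟩ : k + 1 ∈ Icc 1 T)).ne'
      have hαk := (hα k (Ico_subset_Icc_self hkT)).ne'
      have hterm : optimalDiscounted α β x ℓ k = (P k - ℓ k) / α k := by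
        simp only [optimalDiscounted, P]; ring
      rw [hIcc, sum_insert (by simp), ih ⟨by omega, hk⟩, hP, hterm,
        div_eq_mul_one_div (P k), one_div_beta_eq_add hβ hkT]
      field_simp
      ring
  rw [htail 1 (mem_Icc.2 ⟨le_rfl, hT⟩)]
  have hβ1 := (beta_pos hα hβ (mem_Icc.2 ⟨le_rfl, hT⟩)).ne'
  simp only [P, Nat.sub_self, Icc_eq_empty_of_lt one_pos, sum_empty, add_zero,
    mul_div_cancel_left₀ _ hβ1]

end Coefficients

section ExpL

variable {Ω : Type*} [mΩ : MeasurableSpace Ω] {μ : Measure Ω} {ℱ : ℕ → MeasurableSpace Ω}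
  {T : ℕ} {α β : ℕ → ℝ} {W : Ω → ℝ}

/-- A fixed version of the process `L_t(α, W)`, `t ≤ T`; it stays at `L_T` for `t > T`. -/
def expL (μ : Measure Ω) (ℱ : ℕ → MeasurableSpace Ω) (T : ℕ) (α β : ℕ → ℝ) (W : Ω → ℝ)
    (t : ℕ) : Ω → ℝ :=
  if t < T then fun ω => (μ[expL μ ℱ T α β W (t + 1) | ℱ t] ω) ^ (β t / β (t + 1))
  else fun ω => exp (-α T * W ω)
termination_by T - t

theorem expL_of_lt {t : ℕ} (ht : t < T) :
    expL μ ℱ T α β W t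
      = fun ω => (μ[expL μ ℱ T α β W (t + 1) | ℱ t] ω) ^ (β t / β (t + 1)) := by
  rw [expL, if_pos ht]

theorem expL_self : expL μ ℱ T α β W T = fun ω => exp (-α T * W ω) := by
  rw [expL, if_neg (lt_irrefl T)]

theorem stronglyMeasurable_expL (hW : Measurable[ℱ T] W) {t : ℕ} (ht : t ≤ T) :
    StronglyMeasurable[ℱ t] (expL μ ℱ T α β W t) := by
  rcases ht.lt_or_eq with ht | rfl
  · rw [expL_of_lt ht]
    exact (stronglyMeasurable_condExp.measurable.pow_const _).stronglyMeasurable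
  · rw [expL_self]
    exact (hW.const_mul _).exp.stronglyMeasurable

theorem expL_mem_Icc [IsFiniteMeasure μ] (hℱ : ∀ t, ℱ t ≤ mΩ) (hW : Measurable[ℱ T] W)
    (hβ : ∀ t ∈ Ico 1 T, |β t / β (t + 1)| ≤ 1) {C : ℝ} (hC : ∀ᵐ ω ∂μ, |W ω| ≤ C) :
    ∀ᵐ ω ∂μ, ∀ t ∈ Icc 1 T,
      expL μ ℱ T α β W t ω ∈ Set.Icc (exp (-(|α T| * C))) (exp (|α T| * C)) := by
  rw [Filter.eventually_all_finset]
  intro t ht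
  rw [mem_Icc] at ht
  induction ht.2 using Nat.decreasingInduction with
  | self =>
    filter_upwards [hC] with ω h
    rw [expL_self, mem_Icc_exp_iff, log_exp, abs_mul, abs_neg]
    exact ⟨exp_pos _, mul_le_mul_of_nonneg_left h (abs_nonneg _)⟩
  | of_succ k hk ih =>
    have hbd := ih ⟨by omega, hk⟩
    have hint : Integrable (expL μ ℱ T α β W (k + 1)) μ :=
      .of_mem_Icc _ _ ((stronglyMeasurable_expL hW hk).measurable.mono (hℱ _) le_rfl).aemeasurable
        hbd
    rw [expL_of_lt hk]
    filter_upwards [ae_mem_Icc_condExp (hℱ k) hint hbd] with ω h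
    exact rpow_mem_Icc_exp h (hβ k (mem_Ico.2 ⟨ht.1, hk⟩))

theorem condExp_expL {t : ℕ} (ht : t < T) (hβ : β t / β (t + 1) ≠ 0)
    (hnonneg : 0 ≤ᵐ[μ] expL μ ℱ T α β W (t + 1)) :
    μ[expL μ ℱ T α β W (t + 1) | ℱ t]
      =ᵐ[μ] fun ω => expL μ ℱ T α β W t ω ^ (β (t + 1) / β t) := by
  filter_upwards [condExp_nonneg hnonneg] with ω h
  rw [expL_of_lt ht, ← inv_div (β t), rpow_rpow_inv h hβ]

theorem ae_eq_expL {L : ℕ → Ω → ℝ} (hLT : L T =ᵐ[μ] fun ω => exp (-α T * W ω))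
    (hL : ∀ t ∈ Icc 2 T, L (t - 1) =ᵐ[μ] fun ω => (μ[L t | ℱ (t - 1)] ω) ^ (β (t - 1) / β t)) :
    ∀ t ∈ Icc 1 T, L t =ᵐ[μ] expL μ ℱ T α β W t := by
  intro t ht
  rw [mem_Icc] at ht
  induction ht.2 using Nat.decreasingInduction with
  | self => rwa [expL_self]
  | of_succ k hk ih =>
    have hstep := hL (k + 1) (mem_Icc.2 ⟨by omega, hk⟩)
    rw [Nat.add_sub_cancel] at hstep
    rw [expL_of_lt hk]
    filter_upwards [hstep, condExp_congr_ae (m := ℱ k) (ih ⟨by omega, hk⟩)] with ω h1 h2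
    rw [h1, h2]

end ExpL

section Candidate

variable {Ω : Type*} [mΩ : MeasurableSpace Ω] {μ : Measure Ω} {ℱ : ℕ → MeasurableSpace Ω}
  {T : ℕ} {α β : ℕ → ℝ} {L : ℕ → Ω → ℝ} {K x : ℝ}

theorem isBoundedAdapted_optimalDiscounted (hℱmono : Monotone ℱ)
    (hL : ∀ t ∈ Icc 1 T, Measurable[ℱ t] (L t))
    (hK : ∀ᵐ ω ∂μ, ∀ t ∈ Icc 1 T, L t ω ∈ Set.Icc (exp (-K)) (exp K)) :
    IsBoundedAdapted μ ℱ T fun t ω => optimalDiscounted α β x (fun k => log (L k ω)) t := by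
  intro t ht
  have hsub : Icc 1 t ⊆ Icc 1 T := Icc_subset_Icc_right (mem_Icc.1 ht).2
  have hlog : ∀ k ∈ Icc 1 t, Measurable[ℱ t] fun ω => log (L k ω) := fun k hk =>
    ((hL k (hsub hk)).mono (hℱmono (mem_Icc.1 hk).2) le_rfl).log
  refine ⟨?_, ⟨_, hK.mono fun ω h => abs_optimalDiscounted_le (mem_Icc.1 ht).1 fun k hk =>
    (mem_Icc_exp_iff.1 (h k (hsub hk))).2⟩⟩
  refine ((measurable_const.sub (hlog t (mem_Icc.2 ⟨(mem_Icc.1 ht).1, le_rfl⟩))).add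
    (Finset.measurable_sum _ fun k hk => (hlog k ?_).const_mul _)).div_const _
  rw [mem_Icc] at hk ⊢; omega

theorem exp_neg_mul_optimalDiscounted_ae_eq_condExp [IsFiniteMeasure μ] (hℱmono : Monotone ℱ)
    (hℱ : ∀ t, ℱ t ≤ mΩ) (hα : ∀ t ∈ Icc 1 T, 0 < α t)
    (hβ : ∀ t ∈ Icc 1 T, 1 / β t = ∑ k ∈ Icc t T, 1 / α k)
    (hL : ∀ t ∈ Icc 1 T, Measurable[ℱ t] (L t))
    (hK : ∀ᵐ ω ∂μ, ∀ t ∈ Icc 1 T, L t ω ∈ Set.Icc (exp (-K)) (exp K))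
    (hLcond : ∀ t ∈ Ico 1 T, μ[L (t + 1) | ℱ t] =ᵐ[μ] fun ω => L t ω ^ (β (t + 1) / β t)) :
    ∀ t ∈ Icc 1 T, (fun ω => exp (-α t * optimalDiscounted α β x (fun k => log (L k ω)) t))
      =ᵐ[μ] μ[fun ω => exp (-α T * optimalDiscounted α β x (fun k => log (L k ω)) T) | ℱ t] := by
  intro t ht
  have hT : T ∈ Icc 1 T := by rw [mem_Icc] at ht ⊢; omega
  have hz := isBoundedAdapted_optimalDiscounted (α := α) (β := β) (x := x) hℱmono hL hK
  refine ae_eq_condExp_of_condExp_succ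
    (M := fun t ω => exp (-α t * optimalDiscounted α β x (fun k => log (L k ω)) t))
    hℱmono hℱ ((hz T hT).1.const_mul _).exp.stronglyMeasurable
    (hz.integrable_exp_mul hℱ hT _) (fun s hs => ?_) t ht
  have hs1 : s + 1 ∈ Icc 1 T := by rw [mem_Ico] at hs; rw [mem_Icc]; omega
  -- the part of the marginal utility at `s + 1` that is already known at time `s`
  set G : Ω → ℝ := fun ω => exp (-(β 1 * x + ∑ k ∈ Icc 1 s, β (k + 1) / α k * log (L k ω)))
  have hG : StronglyMeasurable[ℱ s] G := by
    refine (measurable_const.add (Finset.measurable_sum _ fun k hk => ?_)).neg.exp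
      |>.stronglyMeasurable
    exact (((hL k (Icc_subset_Icc_right (mem_Ico.1 hs).2.le hk)).mono
      (hℱmono (mem_Icc.1 hk).2) le_rfl).log.const_mul _)
  have hM_succ :
      (fun ω => exp (-α (s + 1) * optimalDiscounted α β x (fun k => log (L k ω)) (s + 1)))
        =ᵐ[μ] G * L (s + 1) := by
    filter_upwards [hK] with ω h
    rw [Pi.mul_apply, neg_mul_optimalDiscounted (hα _ hs1).ne', Nat.add_sub_cancel,
      sub_eq_neg_add, exp_add, exp_log (mem_Icc_exp_iff.1 (h _ hs1)).1]
  have hM : (fun ω => exp (-α s * optimalDiscounted α β x (fun k => log (L k ω)) s))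
      =ᵐ[μ] G * fun ω => L s ω ^ (β (s + 1) / β s) := by
    filter_upwards [hK] with ω h
    rw [Pi.mul_apply, exp_neg_mul_optimalDiscounted hα hβ hs,
      rpow_def_of_pos (mem_Icc_exp_iff.1 (h s (Ico_subset_Icc_self hs))).1, mul_comm (log _)]
  have hLint : Integrable (L (s + 1)) μ :=
    .of_mem_Icc _ _ ((hL _ hs1).mono (hℱ _) le_rfl).aemeasurable (hK.mono fun ω h => h _ hs1)
  calc _ =ᵐ[μ] μ[G * L (s + 1) | ℱ s] := condExp_congr_ae hM_succ
    _ =ᵐ[μ] G * μ[L (s + 1) | ℱ s] := condExp_mul_of_stronglyMeasurable_left hG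
      ((hz.integrable_exp_mul hℱ hs1 _).congr hM_succ) hLint
    _ =ᵐ[μ] G * fun ω => L s ω ^ (β (s + 1) / β s) :=
      (Filter.EventuallyEq.refl _ G).mul (hLcond s hs)
    _ =ᵐ[μ] _ := hM.symm

end Candidate

section OptimalAllocation

variable {Ω : Type*} [mΩ : MeasurableSpace Ω] {μ : Measure Ω} {ℱ : ℕ → MeasurableSpace Ω}
  {T : ℕ} {α β : ℕ → ℝ} {W : Ω → ℝ} {C : ℝ}

theorem sum_optimalDiscounted_expL (hT : 1 ≤ T) (hα : ∀ t ∈ Icc 1 T, 0 < α t)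
    (hβ : ∀ t ∈ Icc 1 T, 1 / β t = ∑ k ∈ Icc t T, 1 / α k) (x : ℝ) (ω : Ω) :
    ∑ t ∈ Icc 1 T, optimalDiscounted α β x (fun k => log (expL μ ℱ T α β W k ω)) t = x + W ω := by
  have hαT := (hα T (mem_Icc.2 ⟨hT, le_rfl⟩)).ne'
  rw [sum_optimalDiscounted hT hα hβ, expL_self, log_exp]
  field_simp
  ring

theorem isBoundedAdapted_optimalDiscounted_expL [IsFiniteMeasure μ] (hℱmono : Monotone ℱ)
    (hℱ : ∀ t, ℱ t ≤ mΩ) (hα : ∀ t ∈ Icc 1 T, 0 < α t)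
    (hβ : ∀ t ∈ Icc 1 T, 1 / β t = ∑ k ∈ Icc t T, 1 / α k) (hW : Measurable[ℱ T] W)
    (hC : ∀ᵐ ω ∂μ, |W ω| ≤ C) (x : ℝ) :
    IsBoundedAdapted μ ℱ T
      fun t ω => optimalDiscounted α β x (fun k => log (expL μ ℱ T α β W k ω)) t :=
  isBoundedAdapted_optimalDiscounted hℱmono
    (fun _ ht => (stronglyMeasurable_expL hW (mem_Icc.1 ht).2).measurable)
    (expL_mem_Icc (β := β) hℱ hW (fun _ ht => abs_beta_div_beta_succ_le_one hα hβ ht) hC)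

theorem exp_neg_mul_optimalDiscounted_expL_ae_eq_condExp [IsFiniteMeasure μ]
    (hℱmono : Monotone ℱ) (hℱ : ∀ t, ℱ t ≤ mΩ) (hα : ∀ t ∈ Icc 1 T, 0 < α t)
    (hβ : ∀ t ∈ Icc 1 T, 1 / β t = ∑ k ∈ Icc t T, 1 / α k) (hW : Measurable[ℱ T] W)
    (hC : ∀ᵐ ω ∂μ, |W ω| ≤ C) (x : ℝ) :
    ∀ t ∈ Icc 1 T,
      (fun ω => exp (-α t * optimalDiscounted α β x (fun k => log (expL μ ℱ T α β W k ω)) t))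
        =ᵐ[μ] μ[fun ω => exp (-α T *
          optimalDiscounted α β x (fun k => log (expL μ ℱ T α β W k ω)) T) | ℱ t] := by
  have hbdd := expL_mem_Icc (α := α) (β := β) hℱ hW
    (fun _ ht => abs_beta_div_beta_succ_le_one hα hβ ht) hC
  refine exp_neg_mul_optimalDiscounted_ae_eq_condExp hℱmono hℱ hα hβ
    (fun t ht => (stronglyMeasurable_expL hW (mem_Icc.1 ht).2).measurable) hbdd
    fun t ht => condExp_expL (mem_Ico.1 ht).2 ?_ ?_
  · have ht1 : t + 1 ∈ Icc 1 T := by rw [mem_Ico] at ht; rw [mem_Icc]; omega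
    exact (div_pos (beta_pos hα hβ (Ico_subset_Icc_self ht)) (beta_pos hα hβ ht1)).ne'
  · have ht1 : t + 1 ∈ Icc 1 T := by rw [mem_Ico] at ht; rw [mem_Icc]; omega
    exact hbdd.mono fun ω h => (mem_Icc_exp_iff.1 (h _ ht1)).1.le

end OptimalAllocation

/-- Explicit optimal allocation of the position `x - Z` under exponential utility
(Proposition 3.5). -/
theorem exponential_optimal_allocation_of_selling_position
    {Ω : Type*} [mΩ : MeasurableSpace Ω] (μ : Measure Ω) [IsProbabilityMeasure μ]
    (T : ℕ) (hT : 1 ≤ T)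
    (ℱ : ℕ → MeasurableSpace Ω) (hℱmono : Monotone ℱ) (hℱle : ∀ t, ℱ t ≤ mΩ)
    (r : ℕ → Ω → ℝ)
    (hr_meas : ∀ t ∈ Finset.Icc 1 T, Measurable[ℱ (t - 1)] (r t))
    (hr_nonneg : ∀ t ∈ Finset.Icc 1 T, ∀ ω, 0 ≤ r t ω)
    (hr_bdd : ∀ t ∈ Finset.Icc 1 T, ∃ C : ℝ, ∀ ω, r t ω ≤ C)
    (B : ℕ → Ω → ℝ) (hB : ∀ t ω, B t ω = ∏ k ∈ Finset.Icc 1 t, (1 + r k ω))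
    (α β : ℕ → ℝ) (hα : ∀ t ∈ Finset.Icc 1 T, 0 < α t)
    (hβ : ∀ t ∈ Finset.Icc 1 T, 1 / β t = ∑ k ∈ Finset.Icc t T, 1 / α k)
    (u : ℕ → ℝ → ℝ)
    (hu : ∀ t x, u t x = (1 / α t) * (1 - Real.exp (-(α t) * x)))
    (x : ℝ) (Z : Ω → ℝ)
    (hZmeas : Measurable[ℱ T] Z) (hZbdd : ∃ C : ℝ, ∀ᵐ ω ∂μ, |Z ω| ≤ C)
    (LnZ : ℕ → Ω → ℝ)
    -- `LnZ` is the process `(L_t(α, -Z))`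
    (hLnZT : LnZ T =ᵐ[μ] fun ω => Real.exp (-(α T) * (-Z ω)))
    (hLnZstep : ∀ t ∈ Finset.Icc 2 T,
      LnZ (t - 1) =ᵐ[μ] fun ω => ((μ[LnZ t | ℱ (t - 1)]) ω) ^ (β (t - 1) / β t))
    (X : ℕ → Ω → ℝ)
    (hX : IsAlloc μ T ℱ B (fun ω => x - Z ω) X)
    (hXopt : ∀ Y, IsAlloc μ T ℱ B (fun ω => x - Z ω) Y →
      allocVal μ T u B Y ≤ allocVal μ T u B X) :
    (∀ᵐ ω ∂μ, X 1 ω = (B 1 ω / α 1) * (β 1 * x - Real.log (LnZ 1 ω))) ∧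
    (∀ t ∈ Finset.Icc 2 T, ∀ᵐ ω ∂μ,
      X t ω = (B t ω / α t) *
        (β 1 * x - Real.log (LnZ t ω) +
          ∑ k ∈ Finset.Icc 1 (t - 1), (β (k + 1) / α k) * Real.log (LnZ k ω))) := by
  obtain rfl : B = fun t ω => ∏ k ∈ Icc 1 t, (1 + r k ω) := funext fun t => funext (hB t)
  obtain ⟨C, hC⟩ := hZbdd
  have hW : Measurable[ℱ T] fun ω => -Z ω := hZmeas.neg
  have hWC : ∀ᵐ ω ∂μ, |-Z ω| ≤ C := by simpa only [abs_neg] using hC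
  have hz := isBoundedAdapted_optimalDiscounted_expL hℱmono hℱle hα hβ hW hWC x
  have hzsum : ∀ᵐ ω ∂μ, ∑ t ∈ Icc 1 T,
      optimalDiscounted α β x (fun k => log (expL μ ℱ T α β (fun ω => -Z ω) k ω)) t = x - Z ω :=
    ae_of_all _ fun ω => by rw [sum_optimalDiscounted_expL hT hα hβ, ← sub_eq_add_neg]
  have hBadapt := isBoundedAdapted_discount (μ := μ) hℱmono hr_meas hr_nonneg hr_bdd
  have hXeq := ae_eq_mul_of_isOptimal hℱle hα hu hBadapt (one_le_discount hr_nonneg) hz hzsum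
    (exp_neg_mul_optimalDiscounted_expL_ae_eq_condExp hℱmono hℱle hα hβ hW hWC x) hX hXopt
  have hLnZ := (Filter.eventually_all_finset _).2 (ae_eq_expL hLnZT hLnZstep)
  have hformula : ∀ t ∈ Icc 1 T, ∀ᵐ ω ∂μ, X t ω = (∏ k ∈ Icc 1 t, (1 + r k ω)) / α t *
      (β 1 * x - log (LnZ t ω) + ∑ k ∈ Icc 1 (t - 1), β (k + 1) / α k * log (LnZ k ω)) := by
    intro t ht
    filter_upwards [hXeq t ht, hLnZ] with ω hX hL
    rw [hX, optimalDiscounted_congr (mem_Icc.1 ht).1 fun k hk =>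
      congrArg log (hL k (Icc_subset_Icc_right (mem_Icc.1 ht).2 hk)).symm, optimalDiscounted]
    ring
  refine ⟨?_, fun t ht => hformula t (Icc_subset_Icc_left one_le_two ht)⟩
  simpa using hformula 1 (mem_Icc.2 ⟨le_rfl, hT⟩)
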